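/- arXiv:2412.05250 — 8 statements merged into one kernel-verified Lean document; each statement's English description precedes it below -/
import Mathlib

section
/- Let R be a commutative Noetherian ring and M a finitely generated R-module. Then M is projective if and only if for every prime ideal p of R the localized module M_p is a free module over the local ring R_p. -/
theorem Module.projective_iff_free_localization_atPrime
    (R : Type*) [CommRing R] (M : Type*) [AddCommGroup M] [Module R M]
    [Module.FinitePresentation R M] :
    Module.Projective R M ↔
      ∀ (p : Ideal R) [p.IsPrime],
        Module.Free (Localization.AtPrime p) (LocalizedModule p.primeCompl M) := by
  -- Behind `freeLocus_eq_univ_iff`: projectivity of a finitely presented module is local at the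
  -- maximal ideals, and a finite flat module over a local ring is free.
  rw [← Module.freeLocus_eq_univ_iff, Set.eq_univ_iff_forall]
  exact ⟨fun h p hp ↦ h ⟨p, hp⟩, fun h x ↦ h x.asIdeal⟩

/-- A finitely generated module over a commutative Noetherian ring is projective if and only if
its localization at every prime ideal is a free module over the corresponding local ring. -/
theorem projective_iff_locally_free
    (R : Type*) [CommRing R] [IsNoetherianRing R]
    (M : Type*) [AddCommGroup M] [Module R M] [Module.Finite R M] :
    Module.Projective R M ↔
      ∀ (p : Ideal R) [p.IsPrime],
        Module.Free (Localization.AtPrime p) (LocalizedModule p.primeCompl M) :=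
  have : Module.FinitePresentation R M := Module.finitePresentation_of_finite R M
  Module.projective_iff_free_localization_atPrime R M
end

section
/- Let R be a unique factorization domain. Every finitely generated projective R-module P such that the localization P_p is free of rank 1 over R_p for every prime ideal p of R is free, i.e., isomorphic to R. -/
open IsLocalization

lemma ufd_gcd_step {R : Type*} [CommRing R] [IsDomain R] [NormalizedGCDMonoid R]
    {K : Type*} [Field K] [Algebra R K] [IsFractionRing R K]
    {ι : Type*} [Fintype ι] (c : ι → R) (k : K)
    (h : ∀ j, ∃ w, k * algebraMap R K (c j) = algebraMap R K w) :
    ∃ e, k * algebraMap R K (Finset.univ.gcd c) = algebraMap R K e := by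
  obtain ⟨u, v, rfl⟩ := IsLocalization.exists_mk'_eq (nonZeroDivisors R) k
  have hv0 : (v : R) ≠ 0 := nonZeroDivisors.coe_ne_zero v
  have hvK : algebraMap R K (v : R) ≠ 0 :=
    (map_ne_zero_iff _ (IsFractionRing.injective R K)).mpr hv0
  have hdvd : ∀ j, (v : R) ∣ u * c j := by
    intro j
    obtain ⟨w, hw⟩ := h j
    rw [IsFractionRing.mk'_eq_div, div_mul_eq_mul_div, div_eq_iff hvK, ← map_mul, ← map_mul] at hw
    exact ⟨w, by rw [IsFractionRing.injective R K hw, mul_comm]⟩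
  have hgcd : (v : R) ∣ u * Finset.univ.gcd c := by
    have h1 : (v : R) ∣ Finset.univ.gcd fun j => u * c j :=
      Finset.dvd_gcd fun j _ => hdvd j
    rw [((Finset.gcd_mul_left' (s := Finset.univ) (f := c) (a := u)).trans (Associated.mul_right (normalize_associated u) _).symm).dvd_iff_dvd_right] at h1
    exact h1.trans ((Associated.mul_right (normalize_associated u) _).dvd)
  obtain ⟨e, he⟩ := hgcd
  refine ⟨e, ?_⟩
  rw [IsFractionRing.mk'_eq_div, div_mul_eq_mul_div, div_eq_iff hvK, ← map_mul, ← map_mul, he,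
    mul_comm]

lemma functional_mul_eq {R : Type*} [CommRing R] [IsDomain R]
    {K : Type*} [Field K] [Algebra R K] [IsFractionRing R K]
    {M : Submodule R K} (f : M →ₗ[R] R) (x y : M) :
    algebraMap R K (f x) * (y : K) = algebraMap R K (f y) * (x : K) := by
  obtain ⟨r, s, hx⟩ := IsLocalization.exists_mk'_eq (nonZeroDivisors R) (x : K)
  obtain ⟨q, t, hy⟩ := IsLocalization.exists_mk'_eq (nonZeroDivisors R) (y : K)
  have hx1 : algebraMap R K (s : R) * (x : K) = algebraMap R K r := by
    rw [← hx, mul_comm]; exact IsLocalization.mk'_spec K r s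
  have hy1 : algebraMap R K (t : R) * (y : K) = algebraMap R K q := by
    rw [← hy, mul_comm]; exact IsLocalization.mk'_spec K q t
  have hmem : ((q * (s : R)) • x : M) = (r * (t : R)) • y := by
    apply Subtype.ext
    show (q * (s : R)) • (x : K) = (r * (t : R)) • (y : K)
    rw [Algebra.smul_def, Algebra.smul_def, map_mul, map_mul, mul_assoc, hx1, mul_assoc, hy1,
      mul_comm]
  have hR : (q * (s : R)) * f x = (r * (t : R)) * f y := by
    have := congrArg f hmem
    simpa [smul_eq_mul] using this
  have hRK : algebraMap R K (q * (s : R)) * algebraMap R K (f x)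
      = algebraMap R K (r * (t : R)) * algebraMap R K (f y) := by
    rw [← map_mul, ← map_mul, hR]
  have hst : algebraMap R K ((s : R) * (t : R)) ≠ 0 :=
    (map_ne_zero_iff _ (IsFractionRing.injective R K)).mpr
      (mul_ne_zero (nonZeroDivisors.coe_ne_zero s) (nonZeroDivisors.coe_ne_zero t))
  apply mul_left_cancel₀ hst
  rw [map_mul, map_mul] at hRK
  rw [map_mul]
  calc algebraMap R K (s : R) * algebraMap R K (t : R) * (algebraMap R K (f x) * (y : K))
      = algebraMap R K (s : R) * algebraMap R K (f x) * (algebraMap R K (t : R) * (y : K)) := by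
        ring
    _ = algebraMap R K (s : R) * algebraMap R K (f x) * algebraMap R K q := by rw [hy1]
    _ = algebraMap R K q * algebraMap R K (s : R) * algebraMap R K (f x) := by ring
    _ = algebraMap R K r * algebraMap R K (t : R) * algebraMap R K (f y) := hRK
    _ = algebraMap R K (t : R) * algebraMap R K (f y) * (algebraMap R K (s : R) * (x : K)) := by
        rw [hx1]; ring
    _ = algebraMap R K (s : R) * algebraMap R K (t : R) * (algebraMap R K (f y) * (x : K)) := by
        ring


lemma key_submodule {R : Type*} [CommRing R] [IsDomain R] [UniqueFactorizationMonoid R]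
    {K : Type*} [Field K] [Algebra R K] [IsFractionRing R K]
    (M : Submodule R K) (hM : M ≠ ⊥) [Module.Finite R M] [Module.Projective R M] :
    ∃ k : K, k ≠ 0 ∧ M = Submodule.span R {k} := by
  classical
  letI := UniqueFactorizationMonoid.normalizationMonoid (α := R)
  letI := UniqueFactorizationMonoid.toNormalizedGCDMonoid R
  obtain ⟨n, f, g, hf, hg, hfg⟩ := Module.Finite.exists_comp_eq_id_of_projective R M
  set u : Fin n → (Fin n → R) := fun i j => if i = j then 1 else 0 with hu
  set a : Fin n → K := fun i => (f (u i) : K) with ha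
  have hdual : ∀ x : M, (x : K) = ∑ i, algebraMap R K (g x i) * a i := by
    intro x
    have h1 : f (g x) = x := LinearMap.ext_iff.mp hfg x
    have h2 : (g x : Fin n → R) = ∑ i, g x i • u i := pi_eq_sum_univ (g x)
    calc (x : K) = ((f (g x) : M) : K) := by rw [h1]
      _ = ((f (∑ i, g x i • u i) : M) : K) := by rw [← h2]
      _ = ((∑ i, g x i • f (u i) : M) : K) := by rw [map_sum]; simp only [map_smul]
      _ = ∑ i, algebraMap R K (g x i) * a i := by
          push_cast
          exact Finset.sum_congr rfl fun i _ => by rw [Algebra.smul_def]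
  obtain ⟨x₀K, hx₀M, hx₀ne⟩ := Submodule.exists_mem_ne_zero_of_ne_bot hM
  set x₀ : M := ⟨x₀K, hx₀M⟩ with hx₀
  set b : Fin n → K := fun i => algebraMap R K (g x₀ i) / x₀K with hbdef
  have hb : ∀ i (x : M), algebraMap R K (g x i) = b i * (x : K) := by
    intro i x
    have h := functional_mul_eq ((LinearMap.proj i).comp g) x₀ x
    simp only [LinearMap.comp_apply, LinearMap.proj_apply] at h
    rw [hbdef]
    field_simp
    exact h.symm
  have hone : ∑ i, b i * a i = 1 := by
    apply mul_left_cancel₀ hx₀ne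
    rw [mul_one]
    calc x₀K * ∑ i, b i * a i = ∑ i, (b i * x₀K) * a i := by
          rw [Finset.mul_sum]; exact Finset.sum_congr rfl fun i _ => by ring
      _ = ∑ i, algebraMap R K (g x₀ i) * a i :=
          Finset.sum_congr rfl fun i _ => by rw [← hb i x₀]
      _ = x₀K := (hdual x₀).symm
  obtain ⟨s, hs⟩ := IsLocalization.exist_integer_multiples_of_finite (nonZeroDivisors R) a
  choose c hc using hs
  have hsK : algebraMap R K (s : R) ≠ 0 :=
    (map_ne_zero_iff _ (IsFractionRing.injective R K)).mpr (nonZeroDivisors.coe_ne_zero s)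
  have haeq : ∀ i, a i = algebraMap R K (c i) / algebraMap R K (s : R) := by
    intro i
    rw [hc i, Algebra.smul_def, mul_div_cancel_left₀ _ hsK]
  have hd0 : Finset.univ.gcd c ≠ 0 := by
    intro h0
    have hall : ∀ i, a i = 0 := by
      intro i
      have hci : c i = 0 := Finset.gcd_eq_zero_iff.mp h0 i (Finset.mem_univ i)
      rw [haeq i, hci, map_zero, zero_div]
    have : (1 : K) = 0 := by rw [← hone]; simp [hall]
    exact one_ne_zero this
  have hdK : algebraMap R K (Finset.univ.gcd c) ≠ 0 :=
    (map_ne_zero_iff _ (IsFractionRing.injective R K)).mpr hd0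
  refine ⟨algebraMap R K (Finset.univ.gcd c) / algebraMap R K (s : R),
    div_ne_zero hdK hsK, le_antisymm ?_ ?_⟩
  · intro x hx
    rw [Submodule.mem_span_singleton]
    have hdvd : ∀ i, Finset.univ.gcd c ∣ c i := fun i => Finset.gcd_dvd (Finset.mem_univ i)
    choose e he using hdvd
    refine ⟨∑ i, g ⟨x, hx⟩ i * e i, ?_⟩
    have hx' : x = ∑ i, algebraMap R K (g ⟨x, hx⟩ i) * a i := hdual ⟨x, hx⟩
    conv_rhs => rw [hx']
    rw [Algebra.smul_def, map_sum, Finset.sum_mul]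
    refine Finset.sum_congr rfl fun i _ => ?_
    rw [haeq i, he i, map_mul, map_mul]
    field_simp
    try ring
  · rw [Submodule.span_singleton_le_iff_mem]
    have hint : ∀ i j, ∃ w, (b i / algebraMap R K (s : R)) * algebraMap R K (c j)
        = algebraMap R K w := by
      intro i j
      refine ⟨g (f (u j)) i, ?_⟩
      have haj : ((f (u j) : M) : K) = a j := rfl
      rw [hb i (f (u j)), haj, haeq j]
      field_simp
      try ring
    choose e' he' using fun i => ufd_gcd_step c (b i / algebraMap R K (s : R)) (hint i)
    have hkM : algebraMap R K (Finset.univ.gcd c) / algebraMap R K (s : R)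
        = ((∑ i, e' i • f (u i) : M) : K) := by
      have hcoe : ((∑ i, e' i • f (u i) : M) : K) = ∑ i, algebraMap R K (e' i) * a i := by
        push_cast
        exact Finset.sum_congr rfl fun i _ => by rw [Algebra.smul_def]
      rw [hcoe]
      calc algebraMap R K (Finset.univ.gcd c) / algebraMap R K (s : R)
          = (algebraMap R K (Finset.univ.gcd c) / algebraMap R K (s : R)) * ∑ i, b i * a i := by
            rw [hone, mul_one]
        _ = ∑ i, (b i / algebraMap R K (s : R) * algebraMap R K (Finset.univ.gcd c)) * a i := by
            rw [Finset.mul_sum]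
            exact Finset.sum_congr rfl fun i _ => by ring
        _ = ∑ i, algebraMap R K (e' i) * a i :=
            Finset.sum_congr rfl fun i _ => by rw [he' i]
    rw [hkM]
    exact Submodule.coe_mem _

/-- Over a unique factorization domain, every finitely generated projective module all of whose
localizations at prime ideals are free of rank 1 is free, i.e. isomorphic to `R`. -/
theorem rank_one_projective_free_over_UFD
    (R : Type u) [CommRing R] [IsDomain R] [UniqueFactorizationMonoid R]
    (P : Type u) [AddCommGroup P] [Module R P] [Module.Finite R P]
    (hP : Module.Projective R P)
    (hrank : ∀ (p : Ideal R) [p.IsPrime],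
      Module.Free (Localization.AtPrime p) (LocalizedModule p.primeCompl P) ∧
      Module.finrank (Localization.AtPrime p) (LocalizedModule p.primeCompl P) = 1) :
    Nonempty (P ≃ₗ[R] R) := by
  classical
  haveI := hP
  haveI : (⊥ : Ideal R).IsPrime := Ideal.bot_prime
  obtain ⟨hfree, hfr⟩ := hrank ⊥
  haveI := hfree
  haveI : IsFractionRing R (Localization.AtPrime (⊥ : Ideal R)) := by
    have hSeq : (⊥ : Ideal R).primeCompl = nonZeroDivisors R := by
      ext x
      simp [Ideal.primeCompl, mem_nonZeroDivisors_iff_ne_zero]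
    show IsLocalization (nonZeroDivisors R) (Localization.AtPrime (⊥ : Ideal R))
    rw [← hSeq]
    exact Localization.isLocalization
  set K := Localization.AtPrime (⊥ : Ideal R) with hK
  haveI : Nontrivial K := IsFractionRing.nontrivial R K
  obtain ⟨bb⟩ := (finrank_eq_one_iff (K := K)
    (V := LocalizedModule (⊥ : Ideal R).primeCompl P) Unit).mp hfr
  let eK : LocalizedModule (⊥ : Ideal R).primeCompl P ≃ₗ[K] K :=
    bb.repr ≪≫ₗ Finsupp.LinearEquiv.finsuppUnique K K Unit
  obtain ⟨m, f0, g0, hf0, hg0, hfg0⟩ := Module.Finite.exists_comp_eq_id_of_projective R P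
  have hinj : Function.Injective
      (LocalizedModule.mkLinearMap (⊥ : Ideal R).primeCompl P) := by
    rw [← LinearMap.ker_eq_bot]
    ext x
    simp only [LinearMap.mem_ker, Submodule.mem_bot]
    constructor
    · intro h
      obtain ⟨s', hs'⟩ := (IsLocalizedModule.eq_zero_iff (⊥ : Ideal R).primeCompl _).mp h
      have hs0 : (s' : R) ≠ 0 := by
        intro h0
        have hmem := s'.2
        rw [h0] at hmem
        exact hmem (Submodule.zero_mem ⊥)
      have hgx : (s' : R) • g0 x = 0 := by
        rw [← map_smul, ← Submonoid.smul_def, hs', map_zero]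
      have hx0 : g0 x = 0 := (smul_eq_zero.mp hgx).resolve_left hs0
      exact hg0 (by rw [hx0, map_zero])
    · rintro rfl
      exact map_zero _
  let F := FractionRing R
  let eF : K ≃ₐ[R] F := IsLocalization.algEquiv (nonZeroDivisors R) K F
  let ι : P →ₗ[R] F := eF.toLinearMap ∘ₗ (eK.restrictScalars R).toLinearMap ∘ₗ
    LocalizedModule.mkLinearMap (⊥ : Ideal R).primeCompl P
  have hι : Function.Injective ι :=
    eF.injective.comp ((eK.restrictScalars R).injective.comp hinj)
  haveI : Module.Finite R (LinearMap.range ι) := Module.Finite.range ι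
  haveI : Module.Projective R (LinearMap.range ι) :=
    Module.Projective.of_equiv (LinearEquiv.ofInjective ι hι)
  have hM : LinearMap.range ι ≠ ⊥ := by
    intro h
    have hP0 : ∀ x : P, x = 0 := by
      intro x
      apply hι
      have hx : ι x ∈ LinearMap.range ι := LinearMap.mem_range_self ι x
      rw [h, Submodule.mem_bot] at hx
      rw [hx, map_zero]
    have hsub : Subsingleton (LocalizedModule (⊥ : Ideal R).primeCompl P) := by
      constructor
      intro p q
      induction p using LocalizedModule.induction_on with
      | h mp sp =>
        induction q using LocalizedModule.induction_on with
        | h mq sq =>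
          rw [hP0 mp, hP0 mq, LocalizedModule.zero_mk, LocalizedModule.zero_mk]
    have hzero : Module.finrank K (LocalizedModule (⊥ : Ideal R).primeCompl P) = 0 :=
      Module.finrank_zero_of_subsingleton
    rw [hzero] at hfr
    exact one_ne_zero hfr.symm
  obtain ⟨k, hk, hMk⟩ := key_submodule (LinearMap.range ι) hM
  haveI : Module.IsTorsionFree R F := inferInstance
  exact ⟨(LinearEquiv.ofInjective ι hι).trans ((LinearEquiv.ofEq _ _ hMk).trans
    (LinearEquiv.toSpanNonzeroSingleton R F k hk).symm)⟩
end

section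
/- Let R be a left hereditary ring, i.e., a (not necessarily commutative) ring every left ideal of which is projective as a left R-module. Then every left submodule of a finitely generated free left R-module R^n is isomorphic to a finite direct sum ⊕_{i=1}^m I_i in which each I_i is a left ideal of R. -/
open LinearMap

set_option maxHeartbeats 1000000
set_option synthInstance.maxHeartbeats 400000

/-- `Fin.cons` as a linear equivalence between `M 0 × Π i, M i.succ` and `Π i, M i`. -/
def consLinearEquiv (R : Type*) [Semiring R] {m : ℕ} (M : Fin (m + 1) → Type*)
    [∀ i, AddCommMonoid (M i)] [∀ i, Module R (M i)] :
    (M 0 × ∀ i : Fin m, M i.succ) ≃ₗ[R] ∀ i, M i where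
  toFun p := Fin.cons p.1 p.2
  invFun f := (f 0, fun i => f i.succ)
  map_add' p q := by
    funext i
    refine Fin.cases ?_ ?_ i <;> simp
  map_smul' c p := by
    funext i
    refine Fin.cases ?_ ?_ i <;> simp
  left_inv p := by simp
  right_inv f := Fin.cons_self_tail f

/-- Over a left hereditary ring (every left ideal is projective), every left submodule of a
finitely generated free left module `R^n` is isomorphic to a finite direct sum of left ideals. -/
theorem submodule_of_free_isom_direct_sum_of_ideals_of_hereditary
    (R : Type u) [Ring R] (hR : ∀ I : Ideal R, Module.Projective R I)
    (n : ℕ) (N : Submodule R (Fin n → R)) :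
    ∃ (m : ℕ) (I : Fin m → Ideal R),
      Nonempty (N ≃ₗ[R] ((i : Fin m) → ↥(I i))) := by
  induction n with
  | zero =>
    haveI : Subsingleton N := ⟨fun a b => Subtype.ext (Subsingleton.elim _ _)⟩
    exact ⟨0, Fin.elim0, ⟨LinearEquiv.ofSubsingleton _ _⟩⟩
  | succ n ih =>
    -- the projection of `N` onto the last coordinate
    set f : N →ₗ[R] R := (LinearMap.proj (Fin.last n)).comp N.subtype with hf_def
    set Ilast : Ideal R := LinearMap.range f with hI_def
    set g : N →ₗ[R] Ilast := f.rangeRestrict with hg_def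
    have hg_surj : Function.Surjective g := f.surjective_rangeRestrict
    -- split the exact sequence `0 → ker g → N → Ilast → 0` using projectivity of `Ilast`
    obtain ⟨l, hl⟩ := Module.projective_lifting_property (h := hR Ilast) g LinearMap.id
      hg_surj
    have hexact : Function.Exact (ker g).subtype g := LinearMap.exact_iff.mpr (Submodule.range_subtype _).symm
    obtain ⟨e, -⟩ := Function.Exact.splitSurjectiveEquiv (R := R) (M := ker g) (N := N) (P := Ilast) hexact (Submodule.injective_subtype (ker g)) ⟨l, hl⟩
    -- embed `ker g` into `R^n` via the first `n` coordinates
    set j : ker g →ₗ[R] (Fin n → R) :=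
      (LinearMap.funLeft R R Fin.castSucc).comp (N.subtype.comp (ker g).subtype) with hj_def
    have hj_inj : Function.Injective j := by
      rintro ⟨⟨x, hxN⟩, hxker⟩ ⟨⟨y, hyN⟩, hyker⟩ hxy
      have hx0 : x (Fin.last n) = 0 := by
        have := congrArg Subtype.val ((LinearMap.mem_ker).mp hxker)
        simpa [hg_def, hf_def] using this
      have hy0 : y (Fin.last n) = 0 := by
        have := congrArg Subtype.val ((LinearMap.mem_ker).mp hyker)
        simpa [hg_def, hf_def] using this
      have hcast : ∀ i : Fin n, x (Fin.castSucc i) = y (Fin.castSucc i) := by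
        intro i
        have := congrFun hxy i
        simpa [hj_def, LinearMap.funLeft] using this
      refine Subtype.ext (Subtype.ext ?_)
      funext i
      refine Fin.lastCases ?_ ?_ i
      · exact hx0.trans hy0.symm
      · exact hcast
    set N' : Submodule R (Fin n → R) := LinearMap.range j with hN'_def
    have eK : (ker g) ≃ₗ[R] N' := LinearEquiv.ofInjective j hj_inj
    obtain ⟨m, I', ⟨eN'⟩⟩ := ih N'
    set J : Fin (m + 1) → Ideal R := Fin.cons Ilast I' with hJ_def
    refine ⟨m + 1, J, ⟨?_⟩⟩
    -- assemble the equivalences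
    have e2 : (↥(ker g) × ↥Ilast) ≃ₗ[R] (↥Ilast × ↥(ker g)) := LinearEquiv.prodComm R _ _
    have e3 : (↥Ilast × ↥(ker g)) ≃ₗ[R] (↥Ilast × ∀ i : Fin m, ↥(I' i)) :=
      LinearEquiv.prodCongr (LinearEquiv.refl R Ilast) (eK.trans eN')
    have e4 : (↥Ilast × ∀ i : Fin m, ↥(I' i)) ≃ₗ[R] ∀ i : Fin (m + 1), ↥(J i) :=
      consLinearEquiv R (fun i => ↥(J i))
    exact e.trans (e2.trans (e3.trans e4))
end

section
/- Let R be an integral domain that is not a field. Then R is a Dedekind domain if and only if every nonzero ideal of R is projective as an R-module. -/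
open FractionalIdeal
open scoped nonZeroDivisors

section Aux

variable {R : Type*} [CommRing R] [IsDomain R]

/-- Extract a finite-sum representation of an element of a product of submodules. -/
lemma exists_finite_sum_of_mem_mul {K : Type*} [CommRing K] [Algebra R K]
    {M N : Submodule R K} {z : K} (hz : z ∈ M * N) :
    ∃ (ι : Type) (_ : Fintype ι) (f g : ι → K),
      (∀ i, f i ∈ M) ∧ (∀ i, g i ∈ N) ∧ ∑ i, f i * g i = z := by
  refine Submodule.mul_induction_on hz ?_ ?_
  · intro m hm n hn
    exact ⟨PUnit, inferInstance, fun _ => m, fun _ => n, fun _ => hm, fun _ => hn, by simp⟩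
  · rintro x y ⟨ι₁, _, f₁, g₁, hf₁, hg₁, rfl⟩ ⟨ι₂, _, f₂, g₂, hf₂, hg₂, rfl⟩
    refine ⟨ι₁ ⊕ ι₂, inferInstance, Sum.elim f₁ f₂, Sum.elim g₁ g₂, ?_, ?_, ?_⟩
    · rintro (i | i) <;> simp [hf₁, hf₂]
    · rintro (i | i) <;> simp [hg₁, hg₂]
    · rw [Fintype.sum_sum_type]; simp

/-- An invertible (nonzero) ideal is projective. -/
lemma Ideal.projective_of_mul_inv_eq_one (I : Ideal R) (hI : I ≠ ⊥)
    (h : (I : FractionalIdeal R⁰ (FractionRing R)) *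
        (I : FractionalIdeal R⁰ (FractionRing R))⁻¹ = 1) :
    Module.Projective R I := by
  set K := FractionRing R
  have hIne : (I : FractionalIdeal R⁰ K) ≠ 0 := coeIdeal_ne_zero.mpr hI
  have h1 : (1 : K) ∈ ((I : FractionalIdeal R⁰ K) : Submodule R K) *
      (((I : FractionalIdeal R⁰ K)⁻¹ : FractionalIdeal R⁰ K) : Submodule R K) := by
    rw [← coe_mul, h]
    exact mem_coe.mpr (mem_one_iff _ |>.mpr ⟨1, map_one _⟩)
  obtain ⟨ι, _, f, g, hf, hg, hsum⟩ := exists_finite_sum_of_mem_mul h1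
  -- choose a i ∈ I with algebraMap (a i) = f i
  have hfI : ∀ i, ∃ a ∈ I, algebraMap R K a = f i := fun i =>
    (mem_coeIdeal _).mp (mem_coe.mp (hf i))
  choose a haI haf using hfI
  -- the map s : I → (ι → R), sending x to the coordinates g i * x (which land in R)
  have hmem : ∀ (i : ι) (x : I), ∃ r : R, algebraMap R K r = g i * algebraMap R K (x : R) := by
    intro i x
    have hx : algebraMap R K (x : R) ∈ (I : FractionalIdeal R⁰ K) :=
      (mem_coeIdeal _).mpr ⟨x, x.2, rfl⟩
    have := (mem_inv_iff hIne).mp (mem_coe.mp (hg i)) _ hx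
    exact (mem_one_iff _).mp this
  have inj := IsFractionRing.injective R K
  let sf : I → ι → R := fun x i => (hmem i x).choose
  have hsf : ∀ (x : I) (i : ι), algebraMap R K (sf x i) = g i * algebraMap R K (x : R) :=
    fun x i => (hmem i x).choose_spec
  let s : I →ₗ[R] (ι → R) :=
    { toFun := sf
      map_add' := by
        intro x y
        funext i
        apply inj
        simp [hsf, mul_add]
      map_smul' := by
        intro r x
        funext i
        apply inj
        simp only [hsf, Submodule.coe_smul_of_tower, _root_.map_mul, Pi.smul_apply,
          smul_eq_mul, RingHom.id_apply]
        ring }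
  let π : (ι → R) →ₗ[R] I :=
    ∑ i : ι, LinearMap.smulRight (LinearMap.proj i) (⟨a i, haI i⟩ : I)
  refine Module.Projective.of_split s π ?_
  ext x
  apply inj
  have : ((π (s x) : I) : R) = ∑ i, sf x i * a i := by
    simp [π, s, LinearMap.sum_apply, LinearMap.smulRight_apply, LinearMap.proj_apply,
      AddSubmonoidClass.coe_finset_sum]
  rw [LinearMap.comp_apply, LinearMap.id_apply, this, map_sum]
  calc ∑ i, algebraMap R K (sf x i * a i)
      = ∑ i, (f i * g i) * algebraMap R K (x : R) := by
        refine Finset.sum_congr rfl fun i _ => ?_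
        rw [_root_.map_mul, hsf, haf]
        ring
    _ = algebraMap R K (x : R) := by rw [← Finset.sum_mul, hsum, one_mul]

/-- A projective (nonzero) ideal is invertible. -/
lemma Ideal.mul_inv_eq_one_of_projective (I : Ideal R) (hI : I ≠ ⊥)
    (h : Module.Projective R I) :
    (I : FractionalIdeal R⁰ (FractionRing R)) *
      (I : FractionalIdeal R⁰ (FractionRing R))⁻¹ = 1 := by
  set K := FractionRing R
  have hIne : (I : FractionalIdeal R⁰ K) ≠ 0 := coeIdeal_ne_zero.mpr hI
  have inj := IsFractionRing.injective R K
  obtain ⟨s, hs⟩ := h.out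
  obtain ⟨x0, hx0I, hx0⟩ := Submodule.exists_mem_ne_zero_of_ne_bot hI
  set x0' : I := ⟨x0, hx0I⟩
  have hx0K : algebraMap R K x0 ≠ 0 := fun hc => hx0 (inj (hc.trans (_root_.map_zero _).symm))
  -- key commutation identity
  have key : ∀ (y : I) (a : I), x0 * s y a = (y : R) * s x0' a := by
    intro y a
    have h1 : (x0 : R) • y = ((y : R)) • x0' := Subtype.ext (by simp [x0', mul_comm])
    have h2 := congrArg (fun z => s z a) h1
    simpa [mul_comm] using h2
  -- the coefficients q a ∈ I⁻¹
  set q : I → K := fun a => algebraMap R K (s x0' a) * (algebraMap R K x0)⁻¹ with hq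
  have hq1 : ∀ (a : I) (y : I), q a * algebraMap R K (y : R) = algebraMap R K (s y a) := by
    intro a y
    have hthis := congrArg (algebraMap R K) (key y a)
    rw [_root_.map_mul, _root_.map_mul] at hthis
    rw [hq]
    field_simp
    linear_combination (-(algebraMap R K x0)⁻¹) * hthis + algebraMap R K (s y a) * mul_inv_cancel₀ hx0K
  have hqinv : ∀ a : I, q a ∈ ((I : FractionalIdeal R⁰ K)⁻¹ : FractionalIdeal R⁰ K) := by
    intro a
    rw [mem_inv_iff hIne]
    intro y hy
    obtain ⟨y', hy', rfl⟩ := (mem_coeIdeal _).mp hy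
    rw [hq1 a ⟨y', hy'⟩]
    exact (mem_one_iff _).mpr ⟨_, rfl⟩
  -- 1 = ∑ q a * algebraMap a over the support of s x0'
  have hx0sum : ((x0' : I) : R) = ∑ a ∈ (s x0').support, s x0' a * (a : R) := by
    have h0 := hs x0'
    rw [Finsupp.linearCombination_apply, Finsupp.sum] at h0
    have h1 := congrArg (fun z : I => (z : R)) h0
    simpa [AddSubmonoidClass.coe_finset_sum] using h1.symm
  have hsum1 : ∑ a ∈ (s x0').support, q a * algebraMap R K (a : R) = 1 := by
    have : ∑ a ∈ (s x0').support, q a * algebraMap R K (a : R)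
        = (∑ a ∈ (s x0').support, algebraMap R K (s x0' a * (a : R)))
          * (algebraMap R K x0)⁻¹ := by
      rw [Finset.sum_mul]
      refine Finset.sum_congr rfl fun a _ => ?_
      rw [_root_.map_mul]
      simp only [hq]
      ring
    rw [this, ← map_sum, ← hx0sum]
    exact mul_inv_cancel₀ hx0K
  -- conclude by antisymmetry
  refine le_antisymm ?_ ?_
  · rw [inv_eq]; exact mul_one_div_le_one
  · rw [FractionalIdeal.one_le, ← mem_coe, coe_mul, ← hsum1]
    refine Submodule.sum_mem _ fun a ha => ?_
    rw [mul_comm (q a)]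
    refine Submodule.mul_mem_mul ?_ (mem_coe.mpr (hqinv a))
    exact mem_coe.mpr ((mem_coeIdeal _).mpr ⟨a, a.2, rfl⟩)

end Aux

/-- An integral domain that is not a field is a Dedekind domain if and only if every nonzero
ideal is projective as a module. -/
theorem isDedekindDomain_iff_ideals_projective
    (R : Type*) [CommRing R] [IsDomain R] (hR : ¬ IsField R) :
    IsDedekindDomain R ↔ ∀ I : Ideal R, I ≠ ⊥ → Module.Projective R I := by
  constructor
  · intro _ I hI
    exact I.projective_of_mul_inv_eq_one hI (coe_ideal_mul_inv (K := FractionRing R) I hI)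
  · intro h
    rw [isDedekindDomain_iff_mul_inv_cancel (K := FractionRing R)]
    intro I hI0
    rw [mul_inv_cancel_iff]
    obtain ⟨a, J, ha, rfl⟩ := exists_eq_spanSingleton_mul I
    have hJ0 : J ≠ ⊥ := by
      rintro rfl
      simp at hI0
    have hJinv : (J : FractionalIdeal R⁰ (FractionRing R)) *
        (J : FractionalIdeal R⁰ (FractionRing R))⁻¹ = 1 :=
      J.mul_inv_eq_one_of_projective hJ0 (h J hJ0)
    have haK : algebraMap R (FractionRing R) a ≠ 0 := fun hc =>
      ha (IsFractionRing.injective R (FractionRing R) (hc.trans (_root_.map_zero _).symm))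
    refine ⟨spanSingleton R⁰ (algebraMap R (FractionRing R) a) *
      (J : FractionalIdeal R⁰ (FractionRing R))⁻¹, ?_⟩
    rw [mul_mul_mul_comm, spanSingleton_mul_spanSingleton, inv_mul_cancel₀ haK,
      spanSingleton_one, one_mul, hJinv]
end

section
/- Let R be a Dedekind domain and let M be a nonzero finitely generated torsion-free R-module, i.e., r • m = 0 with r ∈ R nonzero and m ∈ M implies m = 0. Then M is isomorphic as an R-module to a finite direct sum ⊕_{i=1}^m I_i of nonzero ideals I_i of R. -/
open Submodule Set nonZeroDivisors

/-- A split surjection gives a product decomposition. -/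
noncomputable def mySplitEquiv {R M P : Type*} [CommRing R] [AddCommGroup M] [Module R M]
    [AddCommGroup P] [Module R P] (f : M →ₗ[R] P) (h : P →ₗ[R] M)
    (hfh : f.comp h = LinearMap.id) : M ≃ₗ[R] ↥(LinearMap.ker f) × P := by
  have key : ∀ p, f (h p) = p := fun p =>
    congrArg (fun g => g p) (congrArg DFunLike.coe hfh)
  exact LinearEquiv.ofLinear
    (LinearMap.prod ((LinearMap.id - h.comp f).codRestrict (LinearMap.ker f) (by
      intro m; simp [LinearMap.mem_ker, key])) f)
    ((LinearMap.ker f).subtype.comp (LinearMap.fst R _ P) + h.comp (LinearMap.snd R _ P))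
    (by
      apply LinearMap.ext
      rintro ⟨⟨k, hk⟩, p⟩
      have hk' : f k = 0 := hk
      apply Prod.ext
      · apply Subtype.ext
        show (k + h p) - h (f (k + h p)) = k
        simp [key, hk']
      · simp [key, hk'])
    (by apply LinearMap.ext; intro m; simp [LinearMap.codRestrict])

/-- Split a finite product of submodules of `R` at index `0`. -/
noncomputable def myConsEquiv {R : Type*} [CommRing R] {m : ℕ} (I : Fin (m + 1) → Ideal R) :
    (↥(I 0) × ((j : Fin m) → ↥(I j.succ))) ≃ₗ[R] ((i : Fin (m + 1)) → ↥(I i)) where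
  toFun p := Fin.cases (motive := fun i => ↥(I i)) p.1 (fun j => p.2 j)
  invFun q := (q 0, fun j => q j.succ)
  left_inv p := by simp
  right_inv q := by
    funext i
    refine Fin.cases ?_ (fun j => ?_) i <;> simp
  map_add' p q := by
    funext i
    refine Fin.cases ?_ (fun j => ?_) i <;> simp
  map_smul' r p := by
    funext i
    refine Fin.cases ?_ (fun j => ?_) i <;> simp

/-- A finitely generated torsion-free module over a domain embeds in a finite free module. -/
theorem myExistsEmbedding (R M : Type*) [CommRing R] [IsDomain R] [AddCommGroup M] [Module R M]
    [Module.Finite R M] [NoZeroSMulDivisors R M] :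
    ∃ (n : ℕ) (f : M →ₗ[R] (Fin n → R)), Function.Injective f := by
  classical
  obtain ⟨n0, s, hs⟩ := Module.Finite.exists_fin (R := R) (M := M)
  obtain ⟨I, indepI, hI⟩ := exists_maximal_linearIndepOn R s
  let N := span R (range (s ∘ ((↑) : I → Fin n0)))
  have sI_basis : Module.Basis I R N := Module.Basis.span indepI
  have exists_a : ∀ i : Fin n0, ∃ a : R, a ≠ 0 ∧ a • s i ∈ N := by
    intro i
    by_cases hi : i ∈ I
    · exact ⟨1, one_ne_zero, by rw [one_smul]; exact subset_span (mem_range_self (⟨i, hi⟩ : I))⟩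
    · simpa [N, image_eq_range s I, Function.comp_def] using hI i hi
  choose a ha ha' using exists_a
  let A := ∏ i, a i
  have hA : A ≠ 0 := Finset.prod_ne_zero_iff.mpr fun i _ => ha i
  let φ : M →ₗ[R] M := LinearMap.lsmul R M A
  have hker : LinearMap.ker φ = ⊥ := LinearMap.ker_lsmul hA
  have hrange : ∀ m : M, φ m ∈ N := by
    have : LinearMap.range φ ≤ N := by
      suffices ∀ i, φ (s i) ∈ N by
        rw [LinearMap.range_eq_map, ← hs, Submodule.map_span_le]
        rintro _ ⟨i, rfl⟩
        apply this
      intro i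
      calc (∏ j ∈ {i}ᶜ, a j) • a i • s i ∈ N := N.smul_mem _ (ha' i)
        _ = (∏ j, a j) • s i := by rw [Fintype.prod_eq_prod_compl_mul i, mul_smul]
    exact fun m => this ⟨m, rfl⟩
  let g : M →ₗ[R] N := φ.codRestrict N hrange
  have hginj : Function.Injective g := by
    intro x y hxy
    have : φ x = φ y := congrArg Subtype.val hxy
    exact LinearMap.ker_eq_bot.mp hker this
  have : Finite I := Subtype.finite
  have : Fintype I := Fintype.ofFinite _
  let e : I ≃ Fin (Fintype.card I) := Fintype.equivFin I
  refine ⟨Fintype.card I,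
    ((LinearEquiv.piCongrLeft' R (fun _ : I => R) e).toLinearMap.comp
      (sI_basis.equivFun.toLinearMap.comp g)), ?_⟩
  intro x y hxy
  apply hginj
  apply sI_basis.equivFun.injective
  apply (LinearEquiv.piCongrLeft' R (fun _ : I => R) e).injective
  exact hxy

/-- A nonzero ideal of a Dedekind domain is a projective module. -/
theorem myIdealProjective (R : Type*) [CommRing R] [IsDomain R] [IsDedekindDomain R]
    (I : Ideal R) (hI : I ≠ ⊥) : Module.Projective R ↥I := by
  classical
  let K := FractionRing R
  have hinj : Function.Injective (algebraMap R K) := IsFractionRing.injective R K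
  have hne : (I : FractionalIdeal R⁰ K) ≠ 0 := by
    simpa using hI
  have hmul : (I : FractionalIdeal R⁰ K) * (↑I)⁻¹ = 1 := mul_inv_cancel₀ hne
  have hone : (1 : K) ∈ ((I : FractionalIdeal R⁰ K) : Submodule R K)
      * (((↑I)⁻¹ : FractionalIdeal R⁰ K) : Submodule R K) := by
    rw [← FractionalIdeal.coe_mul, hmul]
    exact FractionalIdeal.mem_coe.mpr (FractionalIdeal.one_mem_one R⁰)
  obtain ⟨T, T', hT, hT', hspan⟩ := Submodule.mem_span_mul_finite_of_mem_mul hone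
  obtain ⟨c, hsupp, hsum⟩ := mem_span_set.mp hspan
  set ι := {k : K // k ∈ c.support} with hι
  have hrep : ∀ k ∈ c.support, ∃ a : R, a ∈ I ∧ ∃ b : K,
      b ∈ ((↑I)⁻¹ : FractionalIdeal R⁰ K) ∧ c k • k = algebraMap R K a * b := by
    intro k hk
    obtain ⟨t, ht, t', ht', rfl⟩ := Set.mem_mul.mp (hsupp hk)
    have htI : t ∈ (I : FractionalIdeal R⁰ K) := FractionalIdeal.mem_coe.mp (hT ht)
    obtain ⟨x, hxI, rfl⟩ := (FractionalIdeal.mem_coeIdeal R⁰).mp htI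
    refine ⟨c (algebraMap R K x * t') * x, I.mul_mem_left _ hxI, t',
      FractionalIdeal.mem_coe.mp (hT' ht'), ?_⟩
    set r := c (algebraMap R K x * t') with hr
    rw [Algebra.smul_def, map_mul]
    ring
  choose! a haI b hbinv heq using hrep
  have sumid : ∑ s : ι, algebraMap R K (a s.1) * b s.1 = 1 := by
    rw [← hsum, Finsupp.sum]
    rw [← Finset.sum_attach c.support (fun k => c k • k)]
    rw [Finset.univ_eq_attach]
    exact Finset.sum_congr rfl fun s _ => (heq s.1 s.2).symm
  have key : ∀ (s : ι) (x : ↥I), b s.1 * algebraMap R K x.1 ∈ (1 : FractionalIdeal R⁰ K) := by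
    intro s x
    have hx : algebraMap R K x.1 ∈ (I : FractionalIdeal R⁰ K) :=
      (FractionalIdeal.mem_coeIdeal R⁰).mpr ⟨x.1, x.2, rfl⟩
    have := FractionalIdeal.mul_mem_mul (hbinv s.1 s.2) hx
    rwa [mul_comm ((↑I)⁻¹) (↑I : FractionalIdeal R⁰ K), hmul] at this
  let eK : R ≃ₗ[R] LinearMap.range (Algebra.linearMap R K) :=
    LinearEquiv.ofInjective (Algebra.linearMap R K) hinj
  have heK : ∀ y, algebraMap R K (eK.symm y) = y.1 := by
    intro y
    have := eK.apply_symm_apply y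
    have h2 : (eK (eK.symm y) : K) = (y : K) := congrArg Subtype.val this
    exact h2
  let μ : ι → (↥I →ₗ[R] K) := fun s => b s.1 • ((Algebra.linearMap R K).comp I.subtype)
  have himg : ∀ (s : ι) (x : ↥I), μ s x ∈ LinearMap.range (Algebra.linearMap R K) := by
    intro s x
    obtain ⟨r, hr⟩ := (FractionalIdeal.mem_one_iff R⁰).mp (key s x)
    exact ⟨r, hr⟩
  let σs : ι → (↥I →ₗ[R] R) := fun s =>
    eK.symm.toLinearMap.comp ((μ s).codRestrict _ (himg s))
  have hσs : ∀ (s : ι) (x : ↥I), algebraMap R K (σs s x) = b s.1 * algebraMap R K x.1 := by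
    intro s x
    show algebraMap R K (eK.symm _) = _
    rw [heK]
    rfl
  let σ : ↥I →ₗ[R] (ι → R) := LinearMap.pi σs
  let π : (ι → R) →ₗ[R] ↥I :=
    ∑ s : ι, (LinearMap.toSpanSingleton R ↥I ⟨a s.1, haI s.1 s.2⟩).comp (LinearMap.proj s)
  have H : π.comp σ = LinearMap.id := by
    apply LinearMap.ext
    intro x
    apply Subtype.ext
    apply hinj
    have hπ : ((π (σ x)) : R) = ∑ s : ι, σs s x * a s.1 := by
      simp only [π, LinearMap.sum_apply, LinearMap.comp_apply, LinearMap.proj_apply,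
        LinearMap.toSpanSingleton_apply]
      rw [AddSubmonoidClass.coe_finset_sum]
      exact Finset.sum_congr rfl fun s _ => by simp [σ, smul_eq_mul]
    show algebraMap R K ((π (σ x)) : R) = algebraMap R K x.1
    rw [hπ, map_sum]
    have : ∀ s : ι, algebraMap R K (σs s x * a s.1)
        = algebraMap R K x.1 * (algebraMap R K (a s.1) * b s.1) := by
      intro s
      rw [map_mul, hσs]
      ring
    rw [Finset.sum_congr rfl fun s _ => this s, ← Finset.mul_sum, sumid, mul_one]
  exact Module.Projective.of_split σ π H

/-- The inductive core of Steinitz's theorem: every submodule of a finite free module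
over a Dedekind domain is a direct sum of nonzero ideals. -/
theorem mySteinitzAux (R : Type*) [CommRing R] [IsDomain R] [IsDedekindDomain R] :
    ∀ (n : ℕ) (N : Submodule R (Fin n → R)),
      ∃ (m : ℕ) (I : Fin m → Ideal R), (∀ i, I i ≠ ⊥) ∧
        Nonempty (↥N ≃ₗ[R] ((i : Fin m) → ↥(I i))) := by
  intro n
  induction n with
  | zero =>
    intro N
    have hsub : Subsingleton ↥N := ⟨fun x y => Subtype.ext (funext fun i => i.elim0)⟩
    have hsub2 : Subsingleton ((i : Fin 0) → ↥((fun j : Fin 0 => (⊤ : Ideal R)) i)) :=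
      ⟨fun x y => funext fun i => i.elim0⟩
    exact ⟨0, fun i => ⊤, fun i => i.elim0, ⟨LinearEquiv.ofSubsingleton _ _⟩⟩
  | succ n ih =>
    intro N
    let f : ↥N →ₗ[R] R := (LinearMap.proj (Fin.last n)).comp N.subtype
    by_cases hI0 : (LinearMap.range f : Ideal R) = ⊥
    · -- the last coordinate vanishes identically; embed into `Fin n → R`
      let g : ↥N →ₗ[R] (Fin n → R) :=
        LinearMap.pi (fun i => (LinearMap.proj i.castSucc).comp N.subtype)
      have hlast : ∀ x : ↥N, (x : Fin (n+1) → R) (Fin.last n) = 0 := fun x => by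
        have : f x ∈ (⊥ : Ideal R) := hI0 ▸ LinearMap.mem_range_self f x
        simpa [f] using this
      have hginj : Function.Injective g := by
        intro x y hxy
        apply Subtype.ext; funext i
        refine Fin.lastCases ?_ (fun j => ?_) i
        · rw [hlast x, hlast y]
        · exact congrFun hxy j
      obtain ⟨m, I, hI, ⟨e⟩⟩ := ih (LinearMap.range g)
      exact ⟨m, I, hI, ⟨(LinearEquiv.ofInjective g hginj).trans e⟩⟩
    · let I₀ : Ideal R := LinearMap.range f
      let f' : ↥N →ₗ[R] ↥I₀ := f.rangeRestrict
      have hproj : Module.Projective R ↥I₀ := myIdealProjective R I₀ hI0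
      obtain ⟨h, hh⟩ := f'.exists_rightInverse_of_surjective
        (LinearMap.range_eq_top.mpr (LinearMap.surjective_rangeRestrict f))
      let e1 : ↥N ≃ₗ[R] ↥(LinearMap.ker f') × ↥I₀ := mySplitEquiv f' h hh
      let g : ↥(LinearMap.ker f') →ₗ[R] (Fin n → R) :=
        LinearMap.pi (fun i => (LinearMap.proj i.castSucc).comp
          (N.subtype.comp (LinearMap.ker f').subtype))
      have hlast : ∀ x : ↥(LinearMap.ker f'),
          ((x : ↥N) : Fin (n+1) → R) (Fin.last n) = 0 := by
        intro x
        have hx : f' x.1 = 0 := x.2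
        have : f x.1 = 0 := congrArg Subtype.val hx
        simpa [f] using this
      have hginj : Function.Injective g := by
        intro x y hxy
        apply Subtype.ext; apply Subtype.ext; funext i
        refine Fin.lastCases ?_ (fun j => ?_) i
        · rw [hlast x, hlast y]
        · exact congrFun hxy j
      obtain ⟨m, I, hI, ⟨e2⟩⟩ := ih (LinearMap.range g)
      let kerEquiv : ↥(LinearMap.ker f') ≃ₗ[R] ((i : Fin m) → ↥(I i)) :=
        (LinearEquiv.ofInjective g hginj).trans e2
      let I' : Fin (m + 1) → Ideal R := Fin.cons I₀ I
      have hI' : ∀ i, I' i ≠ ⊥ := by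
        intro i
        refine Fin.cases ?_ (fun j => ?_) i
        · simpa [I', Fin.cons_zero] using hI0
        · simpa [I', Fin.cons_succ] using hI j
      let eZero : ↥I₀ ≃ₗ[R] ↥(I' 0) := LinearEquiv.ofEq _ _ (by simp [I'])
      let eSucc : ((j : Fin m) → ↥(I j)) ≃ₗ[R] ((j : Fin m) → ↥(I' j.succ)) :=
        LinearEquiv.piCongrRight (fun j => LinearEquiv.ofEq _ _ (by simp [I']))
      refine ⟨m + 1, I', hI', ⟨?_⟩⟩
      exact (((e1.trans (LinearEquiv.prodComm R _ _)).trans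
        (eZero.prodCongr (kerEquiv.trans eSucc))).trans (myConsEquiv I'))

/-- Steinitz's theorem: a nonzero finitely generated torsion-free module over a Dedekind domain
is isomorphic to a finite direct sum of nonzero ideals. -/
theorem torsion_free_module_isom_direct_sum_of_ideals
    (R : Type u) [CommRing R] [IsDomain R] [IsDedekindDomain R]
    (M : Type u) [AddCommGroup M] [Module R M] [Module.Finite R M] [Nontrivial M]
    (htf : ∀ (r : R) (m : M), r ≠ 0 → r • m = 0 → m = 0) :
    ∃ (m : ℕ) (I : Fin m → Ideal R), (∀ i, I i ≠ ⊥) ∧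
      Nonempty (M ≃ₗ[R] ((i : Fin m) → ↥(I i))) := by
  have : NoZeroSMulDivisors R M := by
    constructor
    intro r m hrm
    by_cases hr : r = 0
    · exact Or.inl hr
    · exact Or.inr (htf r m hr hrm)
  obtain ⟨n, f, hf⟩ := myExistsEmbedding R M
  obtain ⟨m, I, hI, ⟨e⟩⟩ := mySteinitzAux R n (LinearMap.range f)
  exact ⟨m, I, hI, ⟨(LinearEquiv.ofInjective f hf).trans e⟩⟩
end

section
/- Let R be a Dedekind domain that is not a field. An R-module M is injective if and only if M is divisible, i.e., for every nonzero r ∈ R the map m ↦ r • m from M to M is surjective. -/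
open scoped nonZeroDivisors


/-- Over a Dedekind domain that is not a field, a module is injective if and only if it is
divisible (Kaplansky). -/
theorem injective_iff_divisible_over_dedekind
    (R : Type u) [CommRing R] [IsDomain R] [IsDedekindDomain R] (hR : ¬ IsField R)
    (M : Type u) [AddCommGroup M] [Module R M] :
    Module.Injective R M ↔
      ∀ r : R, r ≠ 0 → Function.Surjective (fun m : M => r • m) := by
  constructor
  · -- injective → divisible
    intro hI r hr m
    have hinj : Function.Injective (LinearMap.toSpanSingleton R R r) := by
      intro x y hxy
      simp only [LinearMap.toSpanSingleton_apply, smul_eq_mul] at hxy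
      exact mul_left_injective₀ hr hxy
    obtain ⟨h, hh⟩ := hI.out (LinearMap.toSpanSingleton R R r) hinj
      (LinearMap.toSpanSingleton R M m)
    refine ⟨h 1, ?_⟩
    have := hh 1
    simp only [LinearMap.toSpanSingleton_apply, one_smul] at this
    calc r • h 1 = h (r • 1) := (map_smul h r 1).symm
    _ = m := by rw [smul_eq_mul, mul_one, this]
  · -- divisible → injective
    intro hdiv
    refine Module.Baer.injective (fun I f => ?_)
    by_cases hI : I = ⊥
    · subst hI
      refine ⟨0, fun x hx => ?_⟩
      have hx0 : x = 0 := hx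
      subst hx0
      have : (⟨(0 : R), hx⟩ : (⊥ : Ideal R)) = 0 := rfl
      simp [this]
    · set K := FractionRing R
      have hIne : (I : FractionalIdeal R⁰ K) ≠ 0 := by
        simpa using hI
      have hinv : (I : FractionalIdeal R⁰ K) * (I : FractionalIdeal R⁰ K)⁻¹ = 1 :=
        mul_inv_cancel₀ hIne
      have h1 : (1 : K) ∈
          ((I : FractionalIdeal R⁰ K) : Submodule R K) *
            (((I : FractionalIdeal R⁰ K)⁻¹ : FractionalIdeal R⁰ K) : Submodule R K) := by
        rw [← FractionalIdeal.coe_mul, hinv]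
        exact FractionalIdeal.one_mem_one _
      have key : ∃ m : M, ∀ x (hx : x ∈ I), ∃ z, ∃ hz : z ∈ I,
          algebraMap R K z = algebraMap R K x * 1 ∧ x • m = f ⟨z, hz⟩ := by
        refine Submodule.mul_induction_on h1 ?_ ?_
        · -- base case : y = a * b
          intro a ha b hb
          rw [FractionalIdeal.mem_coe, FractionalIdeal.mem_coeIdeal] at ha
          obtain ⟨a₀, ha₀, rfl⟩ := ha
          rw [FractionalIdeal.mem_coe] at hb
          obtain ⟨⟨c, d⟩, hbcd⟩ := IsLocalization.mk'_surjective R⁰ b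
          have hd0 : (d : R) ≠ 0 := nonZeroDivisors.coe_ne_zero d
          have hcd : b * algebraMap R K d = algebraMap R K c := by
            rw [← hbcd]; exact IsLocalization.mk'_spec K c d
          obtain ⟨m₀, hm₀⟩ := hdiv d hd0 (f ⟨a₀, ha₀⟩)
          simp only at hm₀
          refine ⟨c • m₀, fun x hx => ?_⟩
          have hbx : b * algebraMap R K x ∈ (1 : FractionalIdeal R⁰ K) :=
            (FractionalIdeal.mem_inv_iff hIne).mp hb _
              (FractionalIdeal.mem_coeIdeal_of_mem R⁰ hx)
          obtain ⟨r, hr⟩ := (FractionalIdeal.mem_one_iff R⁰).mp hbx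
          refine ⟨r * a₀, I.mul_mem_left r ha₀, ?_, ?_⟩
          · rw [map_mul, hr]; ring
          · -- x • (c • m₀) = f ⟨r * a₀, _⟩
            have hsub : (⟨r * a₀, I.mul_mem_left r ha₀⟩ : I) = r • ⟨a₀, ha₀⟩ := by
              ext; simp [smul_eq_mul]
            rw [hsub, map_smul, ← hm₀, smul_smul, smul_smul]
            congr 1
            apply IsFractionRing.injective R K
            rw [map_mul, map_mul, ← hcd, hr]
            ring
        · -- additive case
          rintro y₁ y₂ ⟨m₁, hm₁⟩ ⟨m₂, hm₂⟩
          refine ⟨m₁ + m₂, fun x hx => ?_⟩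
          obtain ⟨z₁, hz₁, hez₁, hfz₁⟩ := hm₁ x hx
          obtain ⟨z₂, hz₂, hez₂, hfz₂⟩ := hm₂ x hx
          refine ⟨z₁ + z₂, I.add_mem hz₁ hz₂, ?_, ?_⟩
          · rw [map_add, hez₁, hez₂]; ring
          · have hsub : (⟨z₁ + z₂, I.add_mem hz₁ hz₂⟩ : I) = ⟨z₁, hz₁⟩ + ⟨z₂, hz₂⟩ := rfl
            rw [hsub, map_add, smul_add, hfz₁, hfz₂]
      obtain ⟨m, hm⟩ := key
      refine ⟨LinearMap.toSpanSingleton R M m, fun x hx => ?_⟩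
      obtain ⟨z, hz, hez, hfz⟩ := hm x hx
      have hzx : z = x := by
        apply IsFractionRing.injective R K
        rw [hez, mul_one]
      subst hzx
      rw [LinearMap.toSpanSingleton_apply, hfz]
end

section
/- Let R be a Dedekind domain, M an R-module, and D ⊆ M a submodule that is divisible, i.e., for every nonzero r ∈ R the map d ↦ r • d from D to D is surjective. Then D is a direct summand of M: there exists a submodule C ⊆ M with D ⊕ C = M (internally, D ∩ C = 0 and D + C = M). -/
open scoped Pointwise nonZeroDivisors
set_option maxHeartbeats 1000000

/-- Key structure theorem for nonzero ideals in a Dedekind domain, extracted from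
invertibility of fractional ideals: there is a nonzero `s : R`, a finite set `S` of
"indices", and elements `a z ∈ I`, `c z ∈ R` with `∑ c z * a z = s` and
`s ∣ c z * x` for every `x ∈ I`. -/
theorem IsDedekindDomain.exists_representation
    (R : Type u) [CommRing R] [IsDomain R] [IsDedekindDomain R]
    (I : Ideal R) (hI : I ≠ ⊥) :
    ∃ (s : R), s ≠ 0 ∧ ∃ (S : Finset (FractionRing R)) (c a : FractionRing R → R),
      (∀ z ∈ S, a z ∈ I) ∧ (∑ z ∈ S, c z * a z = s) ∧
      (∀ z ∈ S, ∀ x ∈ I, s ∣ c z * x) := by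
  classical
  set K := FractionRing R
  set I' : FractionalIdeal R⁰ K := (I : FractionalIdeal R⁰ K) with hI'
  have hI'0 : I' ≠ 0 := by
    rwa [hI', FractionalIdeal.coeIdeal_ne_zero]
  have hinv : I'⁻¹ * I' = 1 := by
    rw [mul_comm]; exact mul_inv_cancel₀ hI'0
  -- 1 ∈ I'⁻¹ * I' as submodules
  have h1 : (1 : K) ∈ ((I'⁻¹ : FractionalIdeal R⁰ K) : Submodule R K) *
      ((I' : FractionalIdeal R⁰ K) : Submodule R K) := by
    rw [← FractionalIdeal.coe_mul, hinv]
    exact FractionalIdeal.one_mem_one _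
  obtain ⟨T, T', hT, hT', hspan⟩ := Submodule.mem_span_mul_finite_of_mem_mul h1
  rw [show ((T : Set K) * (T' : Set K)) = ((T * T' : Finset K) : Set K) from
    (Finset.coe_mul _ _).symm] at hspan
  obtain ⟨f, -, hf⟩ := Submodule.mem_span_finset.mp hspan
  -- each element of T * T' factors
  have hfac : ∀ z ∈ T * T', ∃ q y : K, q ∈ (I'⁻¹ : FractionalIdeal R⁰ K) ∧
      y ∈ (I' : FractionalIdeal R⁰ K) ∧ q * y = z := by
    intro z hz
    obtain ⟨q, hq, y, hy, rfl⟩ := Finset.mem_mul.mp hz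
    exact ⟨q, y, hT hq, hT' hy, rfl⟩
  set S := T * T' with hS
  -- choose factorizations
  choose! q y hq hy hqy using hfac
  -- clear denominators for the family z ↦ f z * q z
  obtain ⟨b, hb⟩ := IsLocalization.exist_integer_multiples R⁰ S (fun z => f z • q z)
  choose c hc using fun (z : K) (hz : z ∈ S) => hb z hz
  -- a z : preimage of y z in I
  have hyI : ∀ z ∈ S, ∃ a ∈ I, algebraMap R K a = y z := by
    intro z hz
    have := hy z hz
    rw [hI', ← FractionalIdeal.mem_coe, FractionalIdeal.coe_coeIdeal] at this
    exact IsLocalization.mem_coeSubmodule _ _ |>.mp this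
  choose! a haI hay using hyI
  refine ⟨(b : R), nonZeroDivisors.coe_ne_zero b, S,
    fun z => if hz : z ∈ S then c z hz else 0, a, haI, ?_, ?_⟩
  · -- ∑ c z * a z = b
    apply IsFractionRing.injective R K
    have key : ∀ z ∈ S, algebraMap R K ((if hz : z ∈ S then c z hz else 0) * a z)
        = (b : R) • (f z • z) := by
      intro z hz
      rw [dif_pos hz, map_mul, hc z hz, hay z hz, smul_mul_assoc, smul_mul_assoc, hqy z hz]
    rw [map_sum, Finset.sum_congr rfl key, ← Finset.smul_sum, hf, Algebra.smul_def, mul_one]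
  · intro z hz x hx
    have hfq : f z • q z ∈ (I'⁻¹ : FractionalIdeal R⁰ K) := by
      exact FractionalIdeal.mem_coe.mp
        (Submodule.smul_mem _ _ (FractionalIdeal.mem_coe.mpr (hq z hz)))
    have hmem : (f z • q z) * algebraMap R K x ∈ (1 : FractionalIdeal R⁰ K) := by
      rw [← hinv]
      exact FractionalIdeal.mul_mem_mul hfq
        (by rw [hI']; exact FractionalIdeal.mem_coeIdeal_of_mem _ hx)
    obtain ⟨w, hw⟩ := FractionalIdeal.mem_one_iff _ |>.mp hmem
    refine ⟨w, ?_⟩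
    apply IsFractionRing.injective R K
    rw [map_mul, map_mul]
    beta_reduce
    rw [dif_pos hz, hc z hz, smul_mul_assoc, ← hw, Algebra.smul_def]

theorem divisible_baer
    (R : Type u) [CommRing R] [IsDomain R] [IsDedekindDomain R]
    (M : Type u) [AddCommGroup M] [Module R M] (D : Submodule R M)
    (hD : ∀ r : R, r ≠ 0 → Function.Surjective (fun d : D => r • d)) :
    Module.Baer R D := by
  classical
  intro I g
  by_cases hI : I = ⊥
  · refine ⟨0, fun x hx => ?_⟩
    subst hI
    have hx0 : x = 0 := hx
    subst hx0
    exact (map_zero g).symm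
  obtain ⟨s, hs, S, c, a, haI, hsum, hdvd⟩ := IsDedekindDomain.exists_representation R I hI
  choose e he using hD s hs
  set aI : FractionRing R → I := fun z => if hz : z ∈ S then ⟨a z, haI z hz⟩ else 0 with haIdef
  set u : D := ∑ z ∈ S, c z • e (g (aI z)) with hu
  refine ⟨LinearMap.toSpanSingleton R D u, fun x hx => ?_⟩
  choose! w hwspec using fun z (hz : z ∈ S) => hdvd z hz x hx
  have key : ∀ z ∈ S, x • (c z • e (g (aI z))) = g (w z • aI z) := by
    intro z hz
    rw [smul_smul, show x * c z = w z * s by rw [mul_comm x (c z), hwspec z hz, mul_comm],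
      mul_smul, show s • e (g (aI z)) = g (aI z) from he _, ← map_smul]
  have hcoe : ∀ z ∈ S, w z • ((aI z : I) : R) = w z * a z := by
    intro z hz
    rw [haIdef]
    simp [dif_pos hz, smul_eq_mul]
  have hxx : (∑ z ∈ S, w z • aI z) = (⟨x, hx⟩ : I) := by
    apply Subtype.ext
    apply mul_left_cancel₀ hs
    push_cast
    rw [Finset.sum_congr rfl hcoe, Finset.mul_sum]
    have : ∀ z ∈ S, s * (w z * a z) = x * (c z * a z) := by
      intro z hz
      rw [← mul_assoc, ← hwspec z hz]
      ring
    rw [Finset.sum_congr rfl this, ← Finset.mul_sum, hsum]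
    ring
  rw [LinearMap.toSpanSingleton_apply, hu, Finset.smul_sum, Finset.sum_congr rfl key,
    ← map_sum, hxx]

/-- A divisible submodule of a module over a Dedekind domain is a direct summand. -/
theorem divisible_submodule_is_direct_summand
    (R : Type u) [CommRing R] [IsDomain R] [IsDedekindDomain R]
    (M : Type u) [AddCommGroup M] [Module R M] (D : Submodule R M)
    (hD : ∀ r : R, r ≠ 0 → Function.Surjective (fun d : D => r • d)) :
    ∃ C : Submodule R M, D ⊓ C = ⊥ ∧ D ⊔ C = ⊤ := by
  have hb : Module.Baer R D := divisible_baer R M D hD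
  obtain ⟨π, hπ⟩ := hb.extension_property D.subtype Subtype.val_injective LinearMap.id
  have hπ' : ∀ d : D, π (d : M) = d := fun d => congrArg (· d) hπ
  refine ⟨LinearMap.ker π, ?_, ?_⟩
  · rw [eq_bot_iff]
    rintro x ⟨hxD, hxK⟩
    have : π x = ⟨x, hxD⟩ := hπ' ⟨x, hxD⟩
    have h0 : π x = 0 := hxK
    rw [this] at h0
    simpa using congrArg Subtype.val h0
  · rw [eq_top_iff]
    intro m _
    have hker : m - (π m : M) ∈ LinearMap.ker π := by
      rw [LinearMap.mem_ker, map_sub, hπ' (π m), sub_self]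
    exact Submodule.mem_sup.mpr ⟨(π m : M), (π m).2, m - (π m : M), hker, by abel⟩
end

section
/- Every divisible abelian group D is isomorphic to a direct sum of copies of the additive group of rational numbers ℚ and of Prüfer p-groups: there exist an index set I and, for each prime p, an index set J_p, such that D ≅ (⊕_{i ∈ I} ℚ) ⊕ (⊕_{p prime} ⊕_{j ∈ J_p} ℤ(p^∞)), where ℤ(p^∞) denotes the p-primary component of ℚ/ℤ, i.e., the subgroup of ℚ/ℤ of elements annihilated by some power of p. -/
open DirectSum

/-- The group `ℚ/ℤ`. -/
abbrev RatModInt : Type := ℚ ⧸ AddSubgroup.zmultiples (1 : ℚ)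

/-- The Prüfer `p`-group `ℤ(p^∞)`: the `p`-primary component of `ℚ/ℤ`, i.e. the subgroup of
`ℚ/ℤ` consisting of the elements annihilated by some power of `p`. -/
def pruferGroup (p : ℕ) : AddSubgroup RatModInt where
  carrier := {a : RatModInt | ∃ k : ℕ, p ^ k • a = 0}
  zero_mem' := ⟨0, smul_zero _⟩
  add_mem' := by
    rintro a b ⟨k, hk⟩ ⟨l, hl⟩
    refine ⟨k + l, ?_⟩
    have ha : p ^ (k + l) • a = 0 := by
      rw [add_comm, pow_add, mul_smul, hk, smul_zero]
    have hb : p ^ (k + l) • b = 0 := by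
      rw [pow_add, mul_smul, hl, smul_zero]
    rw [smul_add, ha, hb, add_zero]
  neg_mem' := by
    rintro a ⟨k, hk⟩
    exact ⟨k, by rw [smul_neg, hk, neg_zero]⟩

/-! ### Divisibility basics -/

/-- Divisibility predicate. -/
def IsDiv (A : Type*) [AddCommGroup A] : Prop :=
  ∀ n : ℕ, 0 < n → Function.Surjective (fun a : A => n • a)

namespace IsDiv

variable {A B : Type*} [AddCommGroup A] [AddCommGroup B]

noncomputable def divisibleByNat (h : IsDiv A) : DivisibleBy A ℕ where
  div a n := if hn : 0 < n then (h n hn a).choose else 0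
  div_zero a := by simp
  div_cancel a hn := by
    rename_i n
    have hn' : 0 < n := Nat.pos_of_ne_zero hn
    simpa [hn'] using (h n hn' a).choose_spec
  
theorem baer (h : IsDiv A) : Module.Baer ℤ A := by
  letI : DivisibleBy A ℕ := h.divisibleByNat
  letI : DivisibleBy A ℤ := AddGroup.divisibleByIntOfDivisibleByNat A
  exact Module.Baer.of_divisible A

theorem of_addEquiv (e : A ≃+ B) (h : IsDiv A) : IsDiv B := by
  intro n hn b
  obtain ⟨a, ha⟩ := h n hn (e.symm b)
  refine ⟨e a, ?_⟩
  have := congrArg e ha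
  simpa [map_nsmul] using this

end IsDiv

theorem isDiv_rat : IsDiv ℚ := by
  intro n hn q
  exact ⟨q / n, by
    have : (n : ℚ) ≠ 0 := Nat.cast_ne_zero.mpr hn.ne'
    show n • (q / n) = q
    rw [nsmul_eq_mul]; field_simp⟩

namespace PruferAux

/-- The quotient map `ℚ → ℚ/ℤ`. -/
def mkQ : ℚ →+ RatModInt := QuotientAddGroup.mk' _

lemma mkQ_surjective : Function.Surjective mkQ := QuotientAddGroup.mk'_surjective _

lemma mkQ_eq_zero {q : ℚ} : mkQ q = 0 ↔ ∃ z : ℤ, (z : ℚ) = q := by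
  show ((q : RatModInt) = 0) ↔ _
  rw [QuotientAddGroup.eq_zero_iff, AddSubgroup.mem_zmultiples_iff]
  simp [zsmul_eq_mul]

lemma zsmul_mkQ (m : ℤ) (q : ℚ) : m • mkQ q = mkQ (m • q) := (map_zsmul mkQ m q).symm

lemma nsmul_mkQ (m : ℕ) (q : ℚ) : m • mkQ q = mkQ (m • q) := (map_nsmul mkQ m q).symm

variable {p : ℕ} (hp : p.Prime)

/-- The element `1/p` of `ℚ/ℤ`. -/
noncomputable def c (p : ℕ) : RatModInt := mkQ ((p : ℚ)⁻¹)

include hp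

lemma psmul_c : p • c p = 0 := by
  rw [c, nsmul_mkQ, mkQ_eq_zero]
  exact ⟨1, by rw [nsmul_eq_mul]; push_cast; exact (mul_inv_cancel₀ (Nat.cast_ne_zero.mpr hp.pos.ne')).symm⟩

lemma c_mem : c p ∈ pruferGroup p := ⟨1, by simpa [pow_one] using psmul_c hp⟩

lemma zsmul_c_eq_zero_iff {m : ℤ} : m • c p = 0 ↔ (p : ℤ) ∣ m := by
  have hp0 : ((p : ℚ)) ≠ 0 := Nat.cast_ne_zero.mpr hp.pos.ne'
  rw [c, zsmul_mkQ, mkQ_eq_zero]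
  constructor
  · rintro ⟨z, hz⟩
    rw [zsmul_eq_mul] at hz
    refine ⟨z, ?_⟩
    have hq : ((z * p : ℤ) : ℚ) = ((m : ℤ) : ℚ) := by
      push_cast
      field_simp at hz
      linarith
    have := Int.cast_injective (α := ℚ) hq
    rw [← this]; ring
  · rintro ⟨z, rfl⟩
    refine ⟨z, ?_⟩
    rw [zsmul_eq_mul]
    push_cast
    field_simp

lemma c_ne_zero : c p ≠ 0 := by
  intro h
  have := (zsmul_c_eq_zero_iff hp (m := 1)).mp (by simpa using h)
  have := Int.le_of_dvd one_pos this
  have : (2 : ℤ) ≤ 1 := le_trans (by exact_mod_cast hp.two_le) this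
  omega

/-- Every nonzero element of `ℚ/ℤ` killed by `p` is a unit multiple of `c p`. -/
lemma eq_zsmul_c {a : RatModInt} (ha : a ≠ 0) (hpa : p • a = 0) :
    ∃ n : ℤ, ¬ (p : ℤ) ∣ n ∧ n • c p = a := by
  obtain ⟨q, rfl⟩ := mkQ_surjective a
  have hp0 : ((p : ℚ)) ≠ 0 := Nat.cast_ne_zero.mpr hp.pos.ne'
  rw [nsmul_mkQ, mkQ_eq_zero] at hpa
  obtain ⟨z, hz⟩ := hpa
  have hq : q = z / p := by
    rw [nsmul_eq_mul] at hz
    field_simp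
    linarith
  refine ⟨z, ?_, ?_⟩
  · rintro ⟨w, rfl⟩
    apply ha
    rw [mkQ_eq_zero]
    exact ⟨w, by rw [hq]; push_cast; field_simp⟩
  · rw [c, zsmul_mkQ, hq]
    congr 1
omit hp in
lemma mem_prufer_iff {a : RatModInt} : a ∈ pruferGroup p ↔ ∃ k : ℕ, p ^ k • a = 0 := Iff.rfl

/-- Every nonzero element of the Prüfer group generates a subgroup containing `c p`. -/
lemma exists_zsmul_eq_c {a : RatModInt} (hmem : a ∈ pruferGroup p) (ha : a ≠ 0) :
    ∃ m : ℤ, m • a = c p := by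
  classical
  have hex : ∃ k, p ^ k • a = 0 := hmem
  have hmin : p ^ Nat.find hex • a = 0 := Nat.find_spec hex
  have hpos : 0 < Nat.find hex := by
    rcases Nat.eq_zero_or_pos (Nat.find hex) with h0 | h
    · exfalso; apply ha; rw [h0] at hmin; simpa using hmin
    · exact h
  set b := p ^ (Nat.find hex - 1) • a with hb
  have hbne : b ≠ 0 := Nat.find_min hex (by omega)
  have hpb : p • b = 0 := by
    rw [hb, ← mul_smul, ← pow_succ']
    rwa [Nat.sub_add_cancel hpos]
  obtain ⟨n, hn, hnc⟩ := eq_zsmul_c hp hbne hpb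
  -- n is invertible mod p
  have hcop : IsCoprime (n : ℤ) (p : ℤ) := by
    rw [Int.isCoprime_iff_gcd_eq_one]
    rw [Int.gcd]
    have : ¬ p ∣ n.natAbs := by
      intro h; exact hn (Int.dvd_natAbs.mp (Int.natCast_dvd_natCast.mpr h : (p:ℤ) ∣ (n.natAbs : ℤ)))
    simpa [Nat.coprime_comm] using (hp.coprime_iff_not_dvd.mpr this)
  obtain ⟨u, v, huv⟩ := hcop
  refine ⟨u * (p : ℤ) ^ (Nat.find hex - 1), ?_⟩
  have h1 : (u * (p : ℤ) ^ (Nat.find hex - 1)) • a = u • b := by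
    rw [mul_smul, hb]
    congr 1
  rw [h1, ← hnc, ← mul_smul]
  have : u * n = 1 - v * p := by linarith
  rw [this, sub_smul, one_smul, mul_smul]
  have : (p : ℤ) • c p = 0 := by
    rw [natCast_zsmul]; exact psmul_c hp
  rw [this, smul_zero, sub_zero]

/-! ### Divisibility of the Prüfer group, and embedding lemmas -/

theorem isDiv_prufer : IsDiv (pruferGroup p) := by
  rintro n hn ⟨a, hmem⟩
  obtain ⟨k, hk⟩ := hmem
  obtain ⟨q, rfl⟩ := mkQ_surjective a
  have hp0 : ((p : ℚ)) ≠ 0 := Nat.cast_ne_zero.mpr hp.pos.ne'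
  set t := n.factorization p with ht
  set n' := n / p ^ t with hn'
  have hfact : p ^ t * n' = n := Nat.ordProj_mul_ordCompl_eq_self n p
  have hcop : ¬ p ∣ n' := Nat.not_dvd_ordCompl hp hn.ne'
  set b₀ : RatModInt := mkQ (q / p ^ t) with hb₀
  have hb₀mem : b₀ ∈ pruferGroup p := by
    refine ⟨k + t, ?_⟩
    rw [hb₀, nsmul_mkQ]
    have : (p ^ (k + t) : ℕ) • (q / (p:ℚ) ^ t) = (p ^ k : ℕ) • q := by
      rw [nsmul_eq_mul, nsmul_eq_mul]
      push_cast
      rw [pow_add]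
      field_simp
    rw [this, ← nsmul_mkQ, hk]
  have hptb₀ : (p ^ t : ℕ) • b₀ = mkQ q := by
    rw [hb₀, nsmul_mkQ]
    congr 1
    rw [nsmul_eq_mul]
    push_cast
    field_simp
  have hpk : ((p : ℤ) ^ k) • mkQ q = 0 := by
    rw [show ((p:ℤ)^k) = ((p^k : ℕ) : ℤ) by push_cast; ring, natCast_zsmul, hk]
  have hcoprime : IsCoprime (n' : ℤ) ((p : ℤ) ^ k) := by
    rw [Int.isCoprime_iff_gcd_eq_one]
    rw [show ((p:ℤ)^k) = ((p^k : ℕ) : ℤ) by push_cast; ring, Int.gcd_natCast_natCast]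
    exact Nat.Coprime.pow_right k (Nat.coprime_comm.mp (hp.coprime_iff_not_dvd.mpr hcop))
  obtain ⟨u, v, huv⟩ := hcoprime
  refine ⟨⟨u • b₀, AddSubgroup.zsmul_mem _ hb₀mem u⟩, ?_⟩
  apply Subtype.ext
  show (n : ℕ) • (u • b₀) = mkQ q
  rw [smul_comm, ← hfact, mul_comm, mul_smul, hptb₀, ← natCast_zsmul, ← mul_smul]
  have huv' : (u * n' : ℤ) = 1 - v * (p:ℤ)^k := by push_cast at huv ⊢; linarith
  rw [show (u * (n' : ℤ)) = (u * n' : ℤ) by push_cast; ring, huv', sub_smul, one_smul, mul_smul,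
    hpk, smul_zero, sub_zero]

end PruferAux

open PruferAux

theorem exists_inj_rat {A : Type*} [AddCommGroup A] (hA : Module.Baer ℤ A)
    {x : A} (htf : ∀ m : ℤ, m ≠ 0 → m • x ≠ 0) :
    ∃ f : ℚ →+ A, Function.Injective f := by
  obtain ⟨f, hf⟩ := hA.extension_property_addMonoidHom (Int.castAddHom ℚ)
      (fun a b h => Int.cast_injective (α := ℚ) (by simpa using h)) (zmultiplesHom A x)
  refine ⟨f, ?_⟩
  rw [injective_iff_map_eq_zero]
  intro q hq
  by_contra hq0
  have hfi : ∀ m : ℤ, f ((m : ℚ)) = m • x := fun m => DFunLike.congr_fun hf m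
  have hden : ((q.num : ℚ)) = (q.den : ℕ) • q := by
    rw [nsmul_eq_mul]
    exact (Rat.den_mul_eq_num q).symm
  have h1 : f ((q.num : ℚ)) = 0 := by
    rw [hden, map_nsmul, hq, smul_zero]
  rw [hfi] at h1
  exact htf q.num (Rat.num_ne_zero.mpr hq0) h1

theorem exists_inj_prufer {A : Type*} [AddCommGroup A] (hA : Module.Baer ℤ A)
    {x : A} (hx : x ≠ 0) {n : ℕ} (hn : 0 < n) (hnx : n • x = 0) :
    ∃ (p : Nat.Primes) (f : (pruferGroup (p : ℕ)) →+ A), Function.Injective f := by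
  classical
  have hex : ∃ m, 0 < m ∧ m • x = 0 := ⟨n, hn, hnx⟩
  set m := Nat.find hex with hm
  obtain ⟨hmpos, hmx⟩ : 0 < m ∧ m • x = 0 := Nat.find_spec hex
  have hm1 : m ≠ 1 := by
    intro h
    rw [h] at hmx
    simp at hmx
    exact hx hmx
  have hm2 : 2 ≤ m := by omega
  set p := m.minFac with hpdef
  have hp : p.Prime := Nat.minFac_prime hm1
  have hpdvd : p ∣ m := Nat.minFac_dvd m
  set y := (m / p) • x with hy
  have hpy : p • y = 0 := by
    rw [hy, ← mul_smul, Nat.mul_div_cancel' hpdvd, hmx]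
  have hyne : y ≠ 0 := by
    intro h0
    have hlt : m / p < m := Nat.div_lt_self hmpos hp.one_lt
    have hpos' : 0 < m / p := Nat.div_pos (Nat.minFac_le hmpos) hp.pos
    exact Nat.find_min hex hlt ⟨hpos', h0⟩
  have hydvd : ∀ z : ℤ, z • y = 0 → (p : ℤ) ∣ z := by
    intro z hz
    by_contra hnd
    have hcop : IsCoprime z (p : ℤ) := by
      rw [Int.isCoprime_iff_gcd_eq_one, Int.gcd]
      have : ¬ p ∣ z.natAbs := fun h =>
        hnd (Int.dvd_natAbs.mp (Int.natCast_dvd_natCast.mpr h : (p:ℤ) ∣ (z.natAbs : ℤ)))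
      simpa [Nat.coprime_comm] using hp.coprime_iff_not_dvd.mpr this
    obtain ⟨u, v, huv⟩ := hcop
    apply hyne
    calc y = (u * z + v * p) • y := by rw [huv, one_smul]
    _ = u • (z • y) + v • ((p : ℤ) • y) := by rw [add_smul, mul_smul, mul_smul]
    _ = 0 := by rw [hz, smul_zero, natCast_zsmul, hpy, smul_zero, add_zero]
  -- the generator of order `p` in the Prüfer group
  set cE : ↥(pruferGroup p) := ⟨c p, c_mem hp⟩ with hcE
  have hpcE : (p : ℤ) • cE = 0 := by
    apply Subtype.ext
    show (p : ℤ) • (c p) = (0 : RatModInt)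
    rw [natCast_zsmul]
    exact psmul_c hp
  have hpyZ : (p : ℤ) • y = 0 := by rw [natCast_zsmul]; exact hpy
  set φ : ZMod p →+ ↥(pruferGroup p) := ZMod.lift p ⟨zmultiplesHom _ cE, hpcE⟩ with hφdef
  set ψ : ZMod p →+ A := ZMod.lift p ⟨zmultiplesHom _ y, hpyZ⟩ with hψdef
  have hφ : Function.Injective φ := by
    rw [injective_iff_map_eq_zero]
    intro a ha
    obtain ⟨z, rfl⟩ := ZMod.intCast_surjective a
    rw [hφdef, ZMod.lift_coe] at ha
    have : z • cE = 0 := ha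
    have hz : z • (c p) = (0 : RatModInt) := by
      have := congrArg (Subtype.val) this
      simpa using this
    have := (zsmul_c_eq_zero_iff hp).mp hz
    rwa [ZMod.intCast_zmod_eq_zero_iff_dvd]
  obtain ⟨h, hh⟩ := hA.extension_property_addMonoidHom φ hφ ψ
  refine ⟨⟨p, hp⟩, h, ?_⟩
  rw [injective_iff_map_eq_zero]
  intro a ha
  by_contra ha0
  have hane : (a : RatModInt) ≠ 0 := fun h0 => ha0 (Subtype.ext h0)
  obtain ⟨w, hw⟩ := exists_zsmul_eq_c hp a.2 hane
  have hwE : w • a = cE := by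
    apply Subtype.ext
    simpa using hw
  have h1 : h cE = 0 := by rw [← hwE, map_zsmul, ha, smul_zero]
  have h2 : h cE = y := by
    have : φ ((1 : ℤ) : ZMod p) = cE := by rw [hφdef, ZMod.lift_coe]; exact one_zsmul cE
    have h3 := DFunLike.congr_fun hh ((1 : ℤ) : ZMod p)
    rw [AddMonoidHom.comp_apply, this, hψdef, ZMod.lift_coe] at h3
    simpa using h3
  exact hyne (h2 ▸ h1)
/-! ### Structure machinery -/

section Structure

variable {D : Type*} [AddCommGroup D]

/-- A submodule is *good* if it is isomorphic to `ℚ` or to a Prüfer group. -/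
def GoodSub (B : Submodule ℤ D) : Prop :=
  Nonempty (↥B ≃+ ℚ) ∨ ∃ p : Nat.Primes, Nonempty (↥B ≃+ ↥(pruferGroup (p : ℕ)))

theorem GoodSub.isDiv {B : Submodule ℤ D} (h : GoodSub B) : IsDiv ↥B := by
  rcases h with ⟨⟨e⟩⟩ | ⟨p, ⟨e⟩⟩
  · exact IsDiv.of_addEquiv e.symm isDiv_rat
  · exact IsDiv.of_addEquiv e.symm (PruferAux.isDiv_prufer p.2)

theorem isDiv_sSup {S : Set (Submodule ℤ D)} (h : ∀ B ∈ S, IsDiv ↥B) : IsDiv ↥(sSup S) := by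
  intro n hn x
  have hx : (x : D) ∈ ⨆ B : S, (B : Submodule ℤ D) := by
    rw [← sSup_eq_iSup']; exact x.2
  have key : ∃ y ∈ sSup S, n • y = (x : D) := by
    refine Submodule.iSup_induction (motive := fun z => ∃ y ∈ sSup S, n • y = z) _ hx ?_ ?_ ?_
    · rintro ⟨B, hB⟩ z hz
      obtain ⟨⟨y, hy⟩, hy2⟩ := h B hB n hn ⟨z, hz⟩
      refine ⟨y, le_sSup hB hy, ?_⟩
      have := congrArg Subtype.val hy2
      simpa using this
    · exact ⟨0, (sSup S).zero_mem, smul_zero n⟩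
    · rintro z w ⟨y1, h1, e1⟩ ⟨y2, h2, e2⟩
      exact ⟨y1 + y2, add_mem h1 h2, by rw [smul_add, e1, e2]⟩
  obtain ⟨y, hy, hny⟩ := key
  exact ⟨⟨y, hy⟩, Subtype.ext (by simpa using hny)⟩

theorem range_lemma {A : Type*} [AddCommGroup A] {K : Submodule ℤ D} (f : A →+ ↥K)
    (hf : Function.Injective f) {a : A} (ha : a ≠ 0) :
    ∃ B : Submodule ℤ D, Nonempty (↥B ≃+ A) ∧ B ≠ ⊥ ∧ B ≤ K := by
  let g : A →+ D := (K.subtype.toAddMonoidHom).comp f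
  have hg : Function.Injective g := by
    intro u v huv
    exact hf (Subtype.coe_injective huv)
  let g' : A →ₗ[ℤ] D := g.toIntLinearMap
  refine ⟨LinearMap.range g', ⟨(LinearEquiv.ofInjective g' hg).symm.toAddEquiv⟩, ?_, ?_⟩
  · rw [Submodule.ne_bot_iff]
    refine ⟨g' a, LinearMap.mem_range_self g' a, ?_⟩
    intro h0
    exact ha (hg (by rw [map_zero]; exact h0))
  · rintro _ ⟨b, rfl⟩
    exact (f b).2

theorem exists_good_disjoint (hD : IsDiv D) {H : Submodule ℤ D} (hH : IsDiv ↥H) (hne : H ≠ ⊤) :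
    ∃ B : Submodule ℤ D, GoodSub B ∧ B ≠ ⊥ ∧ Disjoint B H := by
  obtain ⟨r, hr⟩ := (hH.baer).extension_property_addMonoidHom H.subtype.toAddMonoidHom
    Subtype.coe_injective (AddMonoidHom.id ↥H)
  have hrH : ∀ h : ↥H, r ↑h = h := fun h => DFunLike.congr_fun hr h
  set K : Submodule ℤ D := LinearMap.ker r.toIntLinearMap with hK
  have hmemK : ∀ d : D, d ∈ K ↔ r d = 0 := fun d => Iff.rfl
  have hKdisj : Disjoint K H := by
    rw [Submodule.disjoint_def]
    intro d hdK hdH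
    have h1 : r d = 0 := hdK
    have h2 : r d = ⟨d, hdH⟩ := hrH ⟨d, hdH⟩
    have := h2.symm.trans h1
    simpa using congrArg Subtype.val this
  have hπ : ∀ d : D, d - ↑(r d) ∈ K := by
    intro d
    rw [hmemK]
    show r (d - ↑(r d)) = 0
    rw [map_sub, hrH, sub_self]
  have hKne : K ≠ ⊥ := by
    intro h0
    apply hne
    rw [Submodule.eq_top_iff']
    intro d
    have := hπ d
    rw [h0, Submodule.mem_bot, sub_eq_zero] at this
    rw [this]
    exact (r d).2
  have hKdiv : IsDiv ↥K := by
    intro n hn x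
    obtain ⟨d, hd⟩ := hD n hn (x : D)
    refine ⟨⟨d - ↑(r d), hπ d⟩, ?_⟩
    apply Subtype.ext
    have hrx : r (x : D) = 0 := x.2
    show n • (d - ↑(r d)) = (x : D)
    have : r (n • d) = 0 := by
      rw [show n • d = (x : D) from hd, hrx]
    rw [smul_sub]
    have hn' : (n • (r d : D)) = ((r (n • d) : D)) := by
      rw [map_nsmul]
      rfl
    rw [hn', this, show n • d = (x : D) from hd]
    simp
  obtain ⟨x, hxK, hxne⟩ := Submodule.ne_bot_iff K |>.mp hKne
  set x₀ : ↥K := ⟨x, hxK⟩ with hx₀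
  have hx₀ne : x₀ ≠ 0 := fun h => hxne (by simpa [hx₀] using congrArg Subtype.val h)
  by_cases htor : ∃ (z : ↥K) (m : ℕ), z ≠ 0 ∧ 0 < m ∧ m • z = 0
  · obtain ⟨z, m, hzne, hmpos, hmz⟩ := htor
    obtain ⟨p, f, hf⟩ := exists_inj_prufer hKdiv.baer hzne hmpos hmz
    have hcne : (⟨PruferAux.c (p : ℕ), PruferAux.c_mem p.2⟩ : ↥(pruferGroup (p : ℕ))) ≠ 0 :=
      fun h => PruferAux.c_ne_zero p.2 (by simpa using congrArg Subtype.val h)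
    obtain ⟨B, ⟨e⟩, hBne, hBK⟩ := range_lemma f hf hcne
    exact ⟨B, Or.inr ⟨p, ⟨e⟩⟩, hBne, hKdisj.mono_left hBK⟩
  · push_neg at htor
    have htf : ∀ m : ℤ, m ≠ 0 → m • x₀ ≠ 0 := by
      intro m hm h0
      have hnat : (m.natAbs : ℕ) • x₀ = 0 := by
        rcases Int.natAbs_eq m with he | he
        · rw [← natCast_zsmul, ← he, h0]
        · rw [← natCast_zsmul, show ((m.natAbs : ℤ)) = -m from by omega, neg_smul, h0, neg_zero]
      exact htor x₀ m.natAbs hx₀ne (Int.natAbs_pos.mpr hm) hnat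
    obtain ⟨f, hf⟩ := exists_inj_rat hKdiv.baer htf
    obtain ⟨B, ⟨e⟩, hBne, hBK⟩ := range_lemma f hf (one_ne_zero (α := ℚ))
    exact ⟨B, Or.inl ⟨e⟩, hBne, hKdisj.mono_left hBK⟩

/-- Adjoining a disjoint element to an independent set in a modular lattice. -/
theorem sSupIndep_insert_of_disjoint {α : Type*} [CompleteLattice α] [IsModularLattice α]
    {S : Set α} {b : α} (hS : sSupIndep S) (hb : Disjoint b (sSup S)) :
    sSupIndep (insert b S) := by
  intro a ha
  rcases eq_or_ne a b with rfl | hab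
  · refine hb.mono_right (sSup_le_sSup ?_)
    intro x hx
    exact (Set.mem_of_mem_insert_of_ne hx.1 hx.2)
  · have haS : a ∈ S := (Set.mem_insert_iff.mp ha).resolve_left hab
    have h1 : Disjoint a (sSup (S \ {a})) := hS haS
    have h2 : Disjoint (a ⊔ sSup (S \ {a})) b := by
      refine (hb.symm.mono_left ?_ : Disjoint _ b)
      exact sup_le (le_sSup haS) (sSup_le_sSup Set.diff_subset)
    have h3 : Disjoint a (sSup (S \ {a}) ⊔ b) :=
      h1.disjoint_sup_right_of_disjoint_sup_left h2
    refine h3.mono_right ?_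
    apply sSup_le
    rintro x ⟨hx, hxa⟩
    rcases Set.mem_insert_iff.mp hx with rfl | hxS
    · exact le_sup_right
    · exact (le_sSup (show x ∈ S \ {a} from ⟨hxS, hxa⟩)).trans le_sup_left

end Structure

/-- Labelled building blocks. -/
abbrev PruferOrRat : Option Nat.Primes → Type :=
  fun o => Option.elim o ℚ (fun p => ↥(pruferGroup (p : ℕ)))

instance : ∀ o, AddCommGroup (PruferOrRat o) := fun o => match o with
  | none => inferInstanceAs (AddCommGroup ℚ)
  | some p => inferInstanceAs (AddCommGroup ↥(pruferGroup (p : ℕ)))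

/-- Transport along equality of indices. -/
def castAddEquiv {ι : Type*} (M : ι → Type*) [∀ i, AddCommMonoid (M i)] {i j : ι} (h : i = j) :
    M i ≃+ M j := by subst h; exact AddEquiv.refl _

/-- Splitting a direct sum over `Option γ`. -/
noncomputable def directSumOption {γ : Type*} (β : Option γ → Type*) [∀ o, AddCommMonoid (β o)] :
    (⨁ o, β o) ≃+ β none × ⨁ g, β (some g) :=
  AddEquiv.mk' DFinsupp.equivProdDFinsupp DFinsupp.equivProdDFinsupp_add

/-- The structure theorem for divisible abelian groups: every divisible abelian group is
isomorphic to a direct sum of copies of `ℚ` and of Prüfer `p`-groups. -/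
theorem divisible_group_structure
    (D : Type) [AddCommGroup D]
    (hD : ∀ n : ℕ, 0 < n → Function.Surjective (fun d : D => n • d)) :
    ∃ (I : Type) (J : Nat.Primes → Type),
      Nonempty (D ≃+ ((⨁ _ : I, ℚ) ×
        ⨁ (p : Nat.Primes), ⨁ _ : J p, ↥(pruferGroup (p : ℕ)))) := by
  classical
  have hdiv : IsDiv D := hD
  -- Zorn's lemma: a maximal independent family of good submodules
  have hzorn : ∀ c ⊆ {S : Set (Submodule ℤ D) | (∀ B ∈ S, GoodSub B) ∧ sSupIndep S},
      IsChain (· ⊆ ·) c → ∃ ub ∈ {S : Set (Submodule ℤ D) | (∀ B ∈ S, GoodSub B) ∧ sSupIndep S},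
        ∀ s ∈ c, s ⊆ ub := by
    intro c hc hchain
    refine ⟨⋃₀ c, ⟨?_, ?_⟩, fun s hs => Set.subset_sUnion_of_mem hs⟩
    · rintro B ⟨s, hs, hBs⟩
      exact (hc hs).1 B hBs
    · rw [sSupIndep_iff_finite]
      intro t ht
      rcases Set.eq_empty_or_nonempty c with rfl | hne
      · rw [Set.sUnion_empty, Set.subset_empty_iff] at ht
        rw [ht]
        exact sSupIndep_empty
      · haveI : Nonempty c := hne.to_subtype
        have hdir : Directed (· ⊆ ·) (fun s : c => (s : Set (Submodule ℤ D))) :=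
          hchain.directedOn.directed_val
        have ht' : ↑t ⊆ ⋃ s : c, (s : Set (Submodule ℤ D)) := by
          rwa [← Set.sUnion_eq_iUnion]
        obtain ⟨⟨s, hs⟩, hts⟩ := hdir.exists_mem_subset_of_finset_subset_biUnion ht'
        exact ((hc hs).2).mono hts
  obtain ⟨S, hSmax⟩ := zorn_subset _ hzorn
  obtain ⟨hSgood, hSind⟩ := hSmax.1
  have hSmaximal := hSmax.2
  -- the maximal family spans everything
  have hHdiv : IsDiv ↥(sSup S) := isDiv_sSup (fun B hB => (hSgood B hB).isDiv)
  have hTop : sSup S = ⊤ := by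
    by_contra hne
    obtain ⟨B, hBgood, hBne, hBdisj⟩ := exists_good_disjoint hdiv hHdiv hne
    have hBnotmem : B ∉ S := fun hmem => hBne (hBdisj.eq_bot_of_le (le_sSup hmem))
    have hS' : (∀ X ∈ insert B S, GoodSub X) ∧ sSupIndep (insert B S) := by
      constructor
      · rintro X hX
        rcases Set.mem_insert_iff.mp hX with rfl | hX
        · exact hBgood
        · exact hSgood X hX
      · exact sSupIndep_insert_of_disjoint hSind hBdisj
    have hsub := hSmaximal hS' (Set.subset_insert B S)
    exact hBnotmem (hsub (Set.mem_insert B S))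
  -- internal direct sum decomposition
  have hInd' : iSupIndep (fun s : S => (s : Submodule ℤ D)) := (sSupIndep_iff S).mp hSind
  have hsup : ⨆ s : S, (s : Submodule ℤ D) = ⊤ := by rw [← sSup_eq_iSup']; exact hTop
  have hInternal : DirectSum.IsInternal (fun s : S => (s : Submodule ℤ D)) :=
    (DirectSum.isInternal_submodule_iff_iSupIndep_and_iSup_eq_top _).mpr ⟨hInd', hsup⟩
  let e0 : (⨁ s : S, ↥(s : Submodule ℤ D)) ≃+ D := AddEquiv.ofBijective _ hInternal
  -- choose labels
  have hchoice : ∀ s : S, ∃ o : Option Nat.Primes,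
      Nonempty (↥(s : Submodule ℤ D) ≃+ PruferOrRat o) := by
    intro s
    rcases hSgood s s.2 with ⟨⟨e⟩⟩ | ⟨p, ⟨e⟩⟩
    · exact ⟨none, ⟨e⟩⟩
    · exact ⟨some p, ⟨e⟩⟩
  choose χ hχ using hchoice
  refine ⟨{s : S // χ s = none}, fun p => {s : S // χ s = some p}, ⟨?_⟩⟩
  let E : ∀ s : S, ↥(s : Submodule ℤ D) ≃+ PruferOrRat (χ s) := fun s => (hχ s).some
  let e1 : (⨁ s : S, ↥(s : Submodule ℤ D)) ≃+ ⨁ s : S, PruferOrRat (χ s) :=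
    DFinsupp.mapRange.addEquiv E
  let σ : (Σ o : Option Nat.Primes, {s : S // χ s = o}) ≃ S := Equiv.sigmaFiberEquiv χ
  let e2 : (⨁ s : S, PruferOrRat (χ s)) ≃+
      ⨁ x : (Σ o : Option Nat.Primes, {s : S // χ s = o}), PruferOrRat (χ (σ x)) :=
    DirectSum.equivCongrLeft σ.symm
  let e3 : (⨁ x : (Σ o : Option Nat.Primes, {s : S // χ s = o}), PruferOrRat (χ (σ x))) ≃+
      ⨁ x : (Σ o : Option Nat.Primes, {s : S // χ s = o}), PruferOrRat x.1 :=
    DFinsupp.mapRange.addEquiv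
      (fun x : (Σ o : Option Nat.Primes, {s : S // χ s = o}) =>
        castAddEquiv PruferOrRat (x.2.2 : χ (σ x) = x.1))
  let e4 := DirectSum.sigmaCurryEquiv
      (δ := fun (o : Option Nat.Primes) (_ : {s : S // χ s = o}) => PruferOrRat o)
  let e5 := directSumOption (fun o : Option Nat.Primes =>
      ⨁ _ : {s : S // χ s = o}, PruferOrRat o)
  exact e0.symm.trans (e1.trans (e2.trans (e3.trans (e4.trans e5))))
end
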